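/- arXiv:1310.0768 — 2 statements merged into one kernel-verified Lean document; each statement's English description precedes it below -/
import Mathlib

section
/- Let (X, α) be a PNTS with X finite and α(x) a closed set of probability distributions for every x ∈ X. Then an equivalence relation E on X is a convex bisimulation if and only if it is a UE-bisimulation. -/
/-!
(⇒) Distributions that agree on unions of `E`-classes give every `E`-invariant function the same
expectation, and an expectation under a point of `H(α y)` is at most the supremum over `α y`.

(⇐) If `μ ∈ H(α x)` had no `=_E`-partner in `H(α y)`, its vector of class masses would lie outside
the class masses of `H(α y)`. That set is compact and convex (`α y` is a closed part of the simplex,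
and in finite dimension convex hulls of compact sets are compact), so a linear functional separates
them. A functional of the class masses is the expectation of an `E`-invariant function, and this
function has a larger supremum over `α x` than over `α y`.
-/

def IsDist {X : Type*} [Fintype X] (μ : X → ℝ) : Prop :=
  (∀ x, 0 ≤ μ x) ∧ ∑ x, μ x = 1

/-- μ =_E ν : μ and ν assign equal mass to every union of E-equivalence classes. -/
def EqMod {X : Type*} [Fintype X] (E : X → X → Prop) (μ ν : X → ℝ) : Prop :=
  ∀ A : Finset X, (∀ x ∈ A, ∀ y, E x y → y ∈ A) → (∑ x ∈ A, μ x) = ∑ x ∈ A, ν x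

def IsConvexBisim {X : Type*} [Fintype X] (α : X → Set (X → ℝ)) (E : X → X → Prop) : Prop :=
  Equivalence E ∧ ∀ x y, E x y →
    (∀ μ ∈ convexHull ℝ (α x), ∃ ν ∈ convexHull ℝ (α y), EqMod E μ ν) ∧
    (∀ ν ∈ convexHull ℝ (α y), ∃ μ ∈ convexHull ℝ (α x), EqMod E μ ν)

def IsUEBisim {X : Type*} [Fintype X] (α : X → Set (X → ℝ)) (E : X → X → Prop) : Prop :=
  Equivalence E ∧ ∀ x y, E x y →
    ∀ f : X → ℝ, (∀ a b, E a b → f a = f b) →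
      (⨆ μ ∈ α x, ∑ z, μ z * f z) = ⨆ ν ∈ α y, ∑ z, ν z * f z

theorem isCompact_convexHull {V : Type*} [AddCommGroup V] [Module ℝ V] [FiniteDimensional ℝ V]
    [TopologicalSpace V] [ContinuousAdd V] [ContinuousSMul ℝ V] {K : Set V} (hK : IsCompact K) :
    IsCompact (convexHull ℝ K) := by
  have hcover : convexHull ℝ K = ⋃ n ∈ Set.Iic (Module.finrank ℝ V + 1),
      (fun p : (Fin n → ℝ) × (Fin n → V) => ∑ i, p.1 i • p.2 i) ''
        (stdSimplex ℝ (Fin n) ×ˢ Set.univ.pi fun _ => K) := by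
    refine subset_antisymm (fun x hx => ?_) ?_
    · obtain ⟨ι, _, z, w, hzK, hind, hw, hw1, rfl⟩ := eq_pos_convex_span_of_mem_convexHull hx
      let e := (Fintype.equivFin ι).symm
      refine Set.mem_biUnion (x := Fintype.card ι) ?_
        ⟨(w ∘ e, z ∘ e), ⟨⟨fun i => (hw _).le, ?_⟩, fun i _ => hzK (Set.mem_range_self _)⟩, ?_⟩
      · exact hind.card_le_finrank_succ.trans (Nat.add_le_add_right (Submodule.finrank_le _) 1)
      · exact (e.sum_comp w).trans hw1
      · exact e.sum_comp fun i => w i • z i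
    · simp only [Set.iUnion_subset_iff]
      rintro n - _ ⟨⟨w, z⟩, ⟨⟨hw0, hw1⟩, hz⟩, rfl⟩
      exact (convex_convexHull ℝ K).sum_mem (fun i _ => hw0 i) hw1
        fun i _ => subset_convexHull ℝ K (hz i trivial)
  rw [hcover]
  exact (Set.finite_Iic _).isCompact_biUnion fun n _ =>
    ((isCompact_stdSimplex ℝ _).prod (isCompact_univ_pi fun _ => hK)).image (by fun_prop)

namespace Real

variable {ι : Type*} {s : Set ι} {g : ι → ℝ}

theorem le_biSup (hg : BddAbove (g '' s)) {a : ι} (ha : a ∈ s) : g a ≤ ⨆ b ∈ s, g b := by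
  refine le_ciSup₂ (f := fun b (_ : b ∈ s) => g b) ?_ a ha
  obtain ⟨B, hB⟩ := hg
  refine ⟨B, ?_⟩
  rintro _ ⟨_, ⟨b, rfl⟩, ⟨hb, rfl⟩⟩
  exact hB (Set.mem_image_of_mem g hb)

theorem biSup_le {c : ℝ} (hc : 0 ≤ c) (h : ∀ b ∈ s, g b ≤ c) : ⨆ b ∈ s, g b ≤ c :=
  Real.iSup_le (fun b => Real.iSup_le (h b) hc) hc

/-- An empty inner supremum contributes the junk value `0` to the outer one. -/
theorem biSup_nonneg_of_notMem {a : ι} (ha : a ∉ s) : 0 ≤ ⨆ b ∈ s, g b := by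
  by_cases hbdd : BddAbove (Set.range fun b => ⨆ _ : b ∈ s, g b)
  · calc (0 : ℝ) = ⨆ _ : a ∈ s, g a := by simp [ha]
      _ ≤ _ := le_ciSup hbdd a
  · rw [Real.iSup_of_not_bddAbove hbdd]

end Real

section Expectation

variable {X : Type*} [Fintype X] {t : Set (X → ℝ)}

theorem zero_notMem_stdSimplex : (0 : X → ℝ) ∉ stdSimplex ℝ X := fun h => by
  simpa using h.2

theorem sum_mul_add_const {ρ : X → ℝ} (hρ : ∑ z, ρ z = 1) (f : X → ℝ) (k : ℝ) :
    ∑ z, ρ z * (f z + k) = ∑ z, ρ z * f z + k := by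
  simp only [mul_add, Finset.sum_add_distrib, ← Finset.sum_mul, hρ, one_mul]

theorem bddAbove_sum_mul_image (ht : t ⊆ stdSimplex ℝ X) (f : X → ℝ) :
    BddAbove ((fun μ => ∑ z, μ z * f z) '' t) :=
  ((isCompact_stdSimplex ℝ X).bddAbove_image (by fun_prop : Continuous _).continuousOn).mono
    (Set.image_mono ht)

theorem sum_mul_le_biSup_of_mem_convexHull (ht : t ⊆ stdSimplex ℝ X) (f : X → ℝ) {μ : X → ℝ}
    (hμ : μ ∈ convexHull ℝ t) : ∑ z, μ z * f z ≤ ⨆ ν ∈ t, ∑ z, ν z * f z :=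
  convexHull_min (fun _ hν => Real.le_biSup (bddAbove_sum_mul_image ht f) hν)
    (convex_halfSpace_le (Fintype.linearCombination ℝ f).isLinear _) hμ

end Expectation

theorem EqMod.symm {X : Type*} [Fintype X] {E : X → X → Prop} {μ ν : X → ℝ} (h : EqMod E μ ν) :
    EqMod E ν μ :=
  fun A hA => (h A hA).symm

section ClassMass

variable {X : Type*} [Fintype X] (r : Setoid X)

open Classical in
noncomputable def classMass : (X → ℝ) →ₗ[ℝ] (Quotient r → ℝ) where
  toFun ρ c := ∑ z with ⟦z⟧ = c, ρ z
  map_add' ρ σ := by ext c; exact Finset.sum_add_distrib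
  map_smul' a ρ := by ext c; exact (Finset.mul_sum ..).symm

open Classical in
theorem sum_mul_comp_mk (ρ : X → ℝ) (g : Quotient r → ℝ) :
    ∑ z, ρ z * g ⟦z⟧ = ∑ c, classMass r ρ c * g c := by
  rw [← Finset.sum_fiberwise Finset.univ (fun z => (⟦z⟧ : Quotient r))]
  refine Finset.sum_congr rfl fun c _ => ?_
  rw [classMass, LinearMap.coe_mk, AddHom.coe_mk, Finset.sum_mul]
  exact Finset.sum_congr rfl fun z hz => by rw [(Finset.mem_filter.1 hz).2]

theorem eqMod_iff_classMass_eq {μ ν : X → ℝ} : EqMod r μ ν ↔ classMass r μ = classMass r ν := by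
  classical
  constructor
  · intro h
    funext c
    refine h _ fun x hx y hxy => ?_
    simp only [Finset.mem_filter, Finset.mem_univ, true_and] at hx ⊢
    rw [← hx, Quotient.sound (r.symm hxy)]
  · intro h A hA
    let f : X → ℝ := fun x => if x ∈ A then 1 else 0
    have hf : ∀ a b, r a b → f a = f b := fun a b hab => by
      have hmem : a ∈ A ↔ b ∈ A := ⟨fun ha => hA a ha b hab, fun hb => hA b hb a (r.symm hab)⟩
      simp only [f, hmem]
    have hsum (ρ : X → ℝ) : ∑ x ∈ A, ρ x = ∑ c, classMass r ρ c * Quotient.lift f hf c := by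
      rw [← sum_mul_comp_mk]
      simp [f]
    rw [hsum, hsum, h]

end ClassMass

section Bisimulation

variable {X : Type*} [Fintype X] (r : Setoid X) {s t : Set (X → ℝ)}

theorem sum_mul_eq_of_eqMod {f : X → ℝ} (hf : ∀ a b, r a b → f a = f b) {μ ν : X → ℝ}
    (h : EqMod r μ ν) : ∑ z, μ z * f z = ∑ z, ν z * f z := by
  have hlift (ρ : X → ℝ) := sum_mul_comp_mk r ρ (Quotient.lift f hf)
  simp only [Quotient.lift_mk] at hlift
  rw [hlift, hlift, (eqMod_iff_classMass_eq r).1 h]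

theorem biSup_le_biSup_of_forall_exists_eqMod (ht : t ⊆ stdSimplex ℝ X)
    (hst : ∀ μ ∈ s, ∃ ν ∈ convexHull ℝ t, EqMod r μ ν) (f : X → ℝ)
    (hf : ∀ a b, r a b → f a = f b) :
    ⨆ μ ∈ s, ∑ z, μ z * f z ≤ ⨆ ν ∈ t, ∑ z, ν z * f z := by
  refine Real.biSup_le (Real.biSup_nonneg_of_notMem fun h => zero_notMem_stdSimplex (ht h))
    fun μ hμ => ?_
  obtain ⟨ν, hν, hμν⟩ := hst μ hμ
  rw [sum_mul_eq_of_eqMod r hf hμν]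
  exact sum_mul_le_biSup_of_mem_convexHull ht f hν

open Classical in
theorem apply_classMass_eq_sum_mul (φ : (Quotient r → ℝ) →ₗ[ℝ] ℝ) (ρ : X → ℝ) :
    φ (classMass r ρ) = ∑ z, ρ z * φ (fun c => if ⟦z⟧ = c then 1 else 0) := by
  rw [sum_mul_comp_mk r ρ fun d => φ fun c => if d = c then 1 else 0, φ.pi_apply_eq_sum_univ]
  simp only [smul_eq_mul]

theorem exists_eqMod_of_forall_biSup_le (hs : s ⊆ stdSimplex ℝ X) (ht : t ⊆ stdSimplex ℝ X)
    (htc : IsClosed t)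
    (hle : ∀ f : X → ℝ, (∀ a b, r a b → f a = f b) →
      ⨆ μ ∈ s, ∑ z, μ z * f z ≤ ⨆ ν ∈ t, ∑ z, ν z * f z)
    {μ : X → ℝ} (hμ : μ ∈ convexHull ℝ s) : ∃ ν ∈ convexHull ℝ t, EqMod r μ ν := by
  classical
  have hK : IsCompact (classMass r '' convexHull ℝ t) :=
    (isCompact_convexHull ((isCompact_stdSimplex ℝ X).of_isClosed_subset htc ht)).image
      (classMass r).continuous_of_finiteDimensional
  by_contra! hne
  have hμK : classMass r μ ∉ classMass r '' convexHull ℝ t := by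
    rintro ⟨ν, hν, hνμ⟩
    exact hne ν hν ((eqMod_iff_classMass_eq r).2 hνμ.symm)
  obtain ⟨φ, u, hφt, hφμ⟩ := geometric_hahn_banach_closed_point
    ((convex_convexHull ℝ t).linear_image (classMass r)) hK.isClosed hμK
  -- shifting by `|u|` makes the separating threshold nonnegative, as `Real.biSup_le` needs
  let f : X → ℝ := fun z => φ (fun c => if ⟦z⟧ = c then 1 else 0) + |u|
  have hf : ∀ a b, r a b → f a = f b := fun a b hab => by simp only [f, Quotient.sound hab]
  have hexp : ∀ ρ ∈ stdSimplex ℝ X, ∑ z, ρ z * f z = φ (classMass r ρ) + |u| := fun ρ hρ => by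
    rw [sum_mul_add_const hρ.2]
    exact congrArg (· + |u|) (apply_classMass_eq_sum_mul r φ.toLinearMap ρ).symm
  have hsup_t : ⨆ ν ∈ t, ∑ z, ν z * f z ≤ u + |u| :=
    Real.biSup_le (by linarith [neg_abs_le u]) fun ν hν => by
      rw [hexp ν (ht hν)]
      linarith [hφt _ ⟨ν, subset_convexHull ℝ t hν, rfl⟩]
  have hμs : ∑ z, μ z * f z ≤ ⨆ ν ∈ s, ∑ z, ν z * f z :=
    sum_mul_le_biSup_of_mem_convexHull hs f hμ
  rw [hexp μ (((convex_stdSimplex ℝ X).convexHull_subset_iff).2 hs hμ)] at hμs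
  linarith [hle f hf]

end Bisimulation

theorem stmt_14 {X : Type*} [Fintype X] (α : X → Set (X → ℝ))
    (hdist : ∀ x, ∀ μ ∈ α x, IsDist μ) (hclosed : ∀ x, IsClosed (α x))
    (E : X → X → Prop) (hE : Equivalence E) :
    IsConvexBisim α E ↔ IsUEBisim α E := by
  let r : Setoid X := ⟨E, hE⟩
  have hsimplex : ∀ x, α x ⊆ stdSimplex ℝ X := hdist
  constructor
  · rintro ⟨-, hbisim⟩
    refine ⟨hE, fun x y hxy f hf => le_antisymm ?_ ?_⟩
    · exact biSup_le_biSup_of_forall_exists_eqMod r (hsimplex y)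
        (fun μ hμ => (hbisim x y hxy).1 μ (subset_convexHull ℝ _ hμ)) f hf
    · refine biSup_le_biSup_of_forall_exists_eqMod r (hsimplex x) (fun ν hν => ?_) f hf
      obtain ⟨μ, hμ, hμν⟩ := (hbisim x y hxy).2 ν (subset_convexHull ℝ _ hν)
      exact ⟨μ, hμ, hμν.symm⟩
  · rintro ⟨-, hue⟩
    refine ⟨hE, fun x y hxy => ⟨fun μ hμ => ?_, fun ν hν => ?_⟩⟩
    · exact exists_eqMod_of_forall_biSup_le r (hsimplex x) (hsimplex y) (hclosed y)
        (fun f hf => (hue x y hxy f hf).le) hμ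
    · obtain ⟨μ, hμ, hμν⟩ := exists_eqMod_of_forall_biSup_le r (hsimplex y) (hsimplex x)
        (hclosed x) (fun f hf => (hue x y hxy f hf).ge) hν
      exact ⟨μ, hμ, hμν.symm⟩
end

section
/- In a Riesz space R with strong unit u, every Boolean element (an element b with (b + b) ⊓ u = b) satisfies 0 ≤ b ≤ u, and the Boolean elements are closed under the operations b ⊔ c, b ⊓ c, and ¬b := u − b. -/
/-!
Since `(b + b) ⊓ u = b + b ⊓ (u - b)`, an element `b` is Boolean exactly when `b` and `u - b`
are disjoint, `b ⊓ (u - b) = 0`. Disjointness forces `0 ≤ b` and `0 ≤ u - b`; it is symmetric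
in `b` and `u - b`, which gives closure under `¬`, and it survives `⊔` by distributivity of the
lattice. Closure under `⊓` then follows by De Morgan, `b ⊓ c = ¬(¬b ⊔ ¬c)`.
-/

section

variable {α : Type*} [Lattice α] [AddCommGroup α] [AddLeftMono α] {u b c : α}

def IsBoolean (u b : α) : Prop := (b + b) ⊓ u = b

theorem add_self_inf_eq_add_inf_sub (u b : α) : (b + b) ⊓ u = b + b ⊓ (u - b) := by
  rw [add_inf, add_sub_cancel]

theorem isBoolean_iff_inf_sub_eq_zero : IsBoolean u b ↔ b ⊓ (u - b) = 0 := by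
  rw [IsBoolean, add_self_inf_eq_add_inf_sub, add_eq_left]

namespace IsBoolean

theorem nonneg (hb : IsBoolean u b) : 0 ≤ b :=
  (isBoolean_iff_inf_sub_eq_zero.mp hb).symm ▸ inf_le_left

theorem sub_nonneg (hb : IsBoolean u b) : 0 ≤ u - b :=
  (isBoolean_iff_inf_sub_eq_zero.mp hb).symm ▸ inf_le_right

theorem le (hb : IsBoolean u b) : b ≤ u :=
  _root_.sub_nonneg.mp hb.sub_nonneg

theorem compl (hb : IsBoolean u b) : IsBoolean u (u - b) := by
  rw [isBoolean_iff_inf_sub_eq_zero, sub_sub_cancel, inf_comm,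
    ← isBoolean_iff_inf_sub_eq_zero]
  exact hb

theorem sup (hb : IsBoolean u b) (hc : IsBoolean u c) : IsBoolean u (b ⊔ c) := by
  let := AddCommGroup.toDistribLattice α
  have hb₀ := isBoolean_iff_inf_sub_eq_zero.mp hb
  have hc₀ := isBoolean_iff_inf_sub_eq_zero.mp hc
  rw [isBoolean_iff_inf_sub_eq_zero, sub_sup, inf_sup_right, ← inf_assoc, hb₀,
    inf_left_comm, hc₀, inf_of_le_left hc.sub_nonneg, inf_of_le_right hb.sub_nonneg,
    sup_idem]

theorem inf (hb : IsBoolean u b) (hc : IsBoolean u c) : IsBoolean u (b ⊓ c) := by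
  have hdm : u - ((u - b) ⊔ (u - c)) = b ⊓ c := by
    rw [sub_sup, sub_sub_cancel, sub_sub_cancel]
  exact hdm ▸ (hb.compl.sup hc.compl).compl

end IsBoolean

end

theorem stmt_19_general {R : Type*} [Lattice R] [AddCommGroup R]
    [CovariantClass R R (· + ·) (· ≤ ·)]
    (u : R) :
    (∀ b : R, (b + b) ⊓ u = b → 0 ≤ b ∧ b ≤ u) ∧
    (∀ b c : R, (b + b) ⊓ u = b → (c + c) ⊓ u = c →
      ((b ⊔ c) + (b ⊔ c)) ⊓ u = b ⊔ c ∧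
      ((b ⊓ c) + (b ⊓ c)) ⊓ u = b ⊓ c ∧
      ((u - b) + (u - b)) ⊓ u = u - b) :=
  ⟨fun _ hb => ⟨IsBoolean.nonneg hb, IsBoolean.le hb⟩,
    fun _ _ hb hc => ⟨IsBoolean.sup hb hc, IsBoolean.inf hb hc, IsBoolean.compl hb⟩⟩

theorem stmt_19 {R : Type*} [Lattice R] [AddCommGroup R] [Module ℝ R]
    [CovariantClass R R (· + ·) (· ≤ ·)]
    (u : R) (hu0 : 0 ≤ u) (hu : ∀ f : R, 0 ≤ f → ∃ n : ℕ, f ≤ n • u) :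
    (∀ b : R, (b + b) ⊓ u = b → 0 ≤ b ∧ b ≤ u) ∧
    (∀ b c : R, (b + b) ⊓ u = b → (c + c) ⊓ u = c →
      ((b ⊔ c) + (b ⊔ c)) ⊓ u = b ⊔ c ∧
      ((b ⊓ c) + (b ⊓ c)) ⊓ u = b ⊓ c ∧
      ((u - b) + (u - b)) ⊓ u = u - b) :=
  stmt_19_general u
end
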